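/- arXiv:2404.09410 — 4 statements merged into one kernel-verified Lean document; each statement's English description precedes it below -/
import Mathlib

section
/- The function ū(z) = 1/(1 + |z|²/8) on ℝⁿ satisfies the profile equation -ū - (1/2) z·∇ū + ū² = 0 for all z ∈ ℝⁿ. -/
open Finset

/-- The profile `ū(z) = 1/(1 + |z|²/8)` satisfies `-ū - (1/2) z·∇ū + ū² = 0`. -/
theorem profile_equation (n : ℕ)
    (ubar : EuclideanSpace ℝ (Fin n) → ℝ)
    (hubar : ∀ z, ubar z = (1 + ‖z‖ ^ 2 / 8)⁻¹)
    (z : EuclideanSpace ℝ (Fin n)) :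
    -ubar z - (1 / 2) * ∑ i, z i * fderiv ℝ ubar z (EuclideanSpace.single i 1)
      + (ubar z) ^ 2 = 0 := by
  have hfun : ubar = fun z => (1 + ‖z‖ ^ 2 / 8)⁻¹ := funext hubar
  subst hfun
  set c : ℝ := 1 + ‖z‖ ^ 2 / 8 with hc
  have hcpos : 0 < c := by positivity
  have hg : HasFDerivAt (fun z : EuclideanSpace ℝ (Fin n) => 1 + ‖z‖ ^ 2 / 8)
      ((8 : ℝ)⁻¹ • (2 • (innerSL ℝ z))) z := by
    have h1 := (hasStrictFDerivAt_norm_sq z).hasFDerivAt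
    have := h1.const_smul (8 : ℝ)⁻¹
    have h2 := this.const_add 1
    refine h2.congr_of_eventuallyEq (Filter.Eventually.of_forall fun w => ?_)
    simp only [Pi.smul_apply, smul_eq_mul]
    ring
  have hinv : HasFDerivAt (fun z : EuclideanSpace ℝ (Fin n) => (1 + ‖z‖ ^ 2 / 8)⁻¹)
      ((-(c ^ 2)⁻¹) • ((8 : ℝ)⁻¹ • (2 • (innerSL ℝ z)))) z :=
    (hasDerivAt_inv hcpos.ne').comp_hasFDerivAt z hg
  rw [hinv.fderiv]
  have happ : ∀ i, ((-(c ^ 2)⁻¹) • ((8 : ℝ)⁻¹ • (2 • (innerSL ℝ z))))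
      (EuclideanSpace.single i 1) = -(c ^ 2)⁻¹ * ((8 : ℝ)⁻¹ * (2 * z i)) := by
    intro i
    simp [EuclideanSpace.inner_single_right, real_inner_comm]
  simp only [happ]
  have hsum : ∑ i, z i * (-(c ^ 2)⁻¹ * ((8 : ℝ)⁻¹ * (2 * z i)))
      = -(c ^ 2)⁻¹ * (8 : ℝ)⁻¹ * 2 * ‖z‖ ^ 2 := by
    have : ‖z‖ ^ 2 = ∑ i, z i * z i := by
      rw [EuclideanSpace.norm_eq, Real.sq_sqrt (by positivity)]
      simp [sq]
    rw [this, Finset.mul_sum]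
    congr 1; ext i; ring
  rw [hsum]
  have h8 : ‖z‖ ^ 2 = 8 * (c - 1) := by rw [hc]; ring
  rw [h8]
  field_simp
  rw [add_sub_cancel, div_self (pow_ne_zero 2 hcpos.ne'), sq, mul_self_div_self]
  ring
end

section
/- Let G, γ : [0, T) → ℝ be continuous with γ absolutely continuous, and suppose there are constants C ≥ 1, n ≥ 1 with γ(0) ≥ 10000 n C², G(0) < 100C, |γ'(τ) - 1| ≤ 4nC G(τ)/γ(τ) a.e., and G'(τ) ≤ (-1/10 + 2C/γ(τ)) G(τ) + C + 8nC G(τ)² (1/γ(τ) + 1/γ(τ)²) a.e. Then for all τ ∈ [0, T), G(τ) < 100C and γ(τ) ≥ γ(0). -/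
/-!
On the region `98 C ≤ G ≤ 101 C`, `γ ≥ 9999 n C²` the right-hand side of the energy inequality is
nonpositive, and on `G ≤ 101 C`, `γ ≥ 9999 n C²` the modulation equation forces `γ' ≥ 0`. With
`M = max (G 0) (99 C) < 100 C`, the closed condition `G ≤ M ∧ γ ≥ γ(0)` propagates forward by
continuous induction: near a point where it holds, continuity keeps `G` within `C / 2` and `γ`
above `γ(0) - 1`, so `γ` cannot decrease, and either `G` stays below `M` outright or `G > 98 C`
there and `G` cannot increase.
-/

open MeasureTheory Set Filter Topology

lemma energy_rhs_nonpos {C m Gv x : ℝ} (hC : 1 ≤ C) (hm : 1 ≤ m)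
    (hlo : 98 * C ≤ Gv) (hhi : Gv ≤ 101 * C) (hx : 9999 * m * C ^ 2 ≤ x) :
    (-1 / 10 + 2 * C / x) * Gv + C + 8 * m * C * Gv ^ 2 * (1 / x + 1 / x ^ 2) ≤ 0 := by
  have hmC : 1 ≤ m * C ^ 2 := by nlinarith
  obtain ⟨u, rfl⟩ : ∃ u, x = u⁻¹ := ⟨x⁻¹, (inv_inv x).symm⟩
  have hu0 : 0 < u := inv_pos.mp (by linarith)
  have hu : m * C ^ 2 * u ≤ 1 / 9999 := by
    have := mul_le_mul_of_nonneg_right hx hu0.le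
    rw [inv_mul_cancel₀ hu0.ne'] at this
    linarith
  have hlin : 2 * C * Gv * u ≤ C / 40 := by
    nlinarith [mul_le_mul_of_nonneg_left hhi (by positivity : 0 ≤ 2 * C * u)]
  have hmG : m * Gv ^ 2 * u ≤ 10201 / 9999 := by
    nlinarith [mul_le_mul_of_nonneg_left (sq_le_sq' (by linarith) hhi) (by positivity : 0 ≤ m * u)]
  have hquad : 8 * m * C * Gv ^ 2 * (u + u ^ 2) ≤ 33 / 4 * C := by
    have hu1 : u ≤ 1 / 9999 := by nlinarith
    have := mul_le_mul hmG (by linarith : 1 + u ≤ 1 + 1 / 9999) (by positivity) (by positivity)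
    nlinarith
  simp only [div_inv_eq_mul, inv_pow]
  nlinarith

lemma nonneg_of_abs_sub_one_le {C m Gv x d : ℝ} (hC : 1 ≤ C) (hm : 1 ≤ m)
    (hGv : Gv ≤ 101 * C) (hx : 9999 * m * C ^ 2 ≤ x) (hd : |d - 1| ≤ 4 * m * C * Gv / x) :
    0 ≤ d := by
  have hx0 : 0 < x := by nlinarith
  have hsmall : 4 * m * C * Gv / x ≤ 1 := by
    rw [div_le_one hx0]
    nlinarith [mul_le_mul_of_nonneg_left hGv (by positivity : 0 ≤ 4 * m * C)]
  linarith [(abs_le.mp (hd.trans hsmall)).1]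

theorem Filter.Eventually.forall_Icc_nhdsGE {α : Type*} [LinearOrder α] [TopologicalSpace α]
    [OrderTopology α] [NoMaxOrder α] {p : α → Prop} {x : α} (h : ∀ᶠ u in 𝓝[≥] x, p u) :
    ∀ᶠ s in 𝓝[≥] x, ∀ u ∈ Icc x s, p u := by
  obtain ⟨y, hxy, hy⟩ := mem_nhdsGE_iff_exists_Ico_subset.1 h
  filter_upwards [Ico_mem_nhdsGE hxy] with s hs u hu using hy ⟨hu.1, hu.2.trans_lt hs.2⟩

theorem Ico_subset_of_forall_mem_nhdsGT {α : Type*} [ConditionallyCompleteLinearOrder α]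
    [TopologicalSpace α] [OrderTopology α] [DenselyOrdered α] {a b : α} {s : Set α}
    (hs : ∀ c ∈ Ico a b, IsClosed (s ∩ Icc a c)) (ha : a ∈ s)
    (hgt : ∀ x ∈ s ∩ Ico a b, s ∈ 𝓝[>] x) : Ico a b ⊆ s := fun c hc =>
  (hs c hc).Icc_subset_of_forall_mem_nhdsWithin ha
    (fun x hx => hgt x ⟨hx.1, hx.2.1, hx.2.2.trans_le hc.2.le⟩) ⟨hc.1, le_rfl⟩

section IntegralRepresentation

variable {f f' : ℝ → ℝ} {T a b : ℝ}

theorem sub_eq_integral_of_integral_rep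
    (hrep : ∀ τ ∈ Ico (0 : ℝ) T, f τ = f 0 + ∫ s in (0 : ℝ)..τ, f' s)
    (hint : ∀ τ ∈ Ico (0 : ℝ) T, IntervalIntegrable f' volume 0 τ)
    (ha : a ∈ Ico (0 : ℝ) T) (hb : b ∈ Ico (0 : ℝ) T) :
    f b - f a = ∫ s in a..b, f' s := by
  rw [hrep b hb, hrep a ha,
    ← intervalIntegral.integral_interval_sub_left (hint b hb) (hint a ha)]
  ring

theorem le_of_integral_rep_of_ae_nonneg
    (hrep : ∀ τ ∈ Ico (0 : ℝ) T, f τ = f 0 + ∫ s in (0 : ℝ)..τ, f' s)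
    (hint : ∀ τ ∈ Ico (0 : ℝ) T, IntervalIntegrable f' volume 0 τ)
    (ha : 0 ≤ a) (hab : a ≤ b) (hb : b < T) (hf' : ∀ᵐ s, s ∈ Icc a b → 0 ≤ f' s) :
    f a ≤ f b := by
  have hsub := sub_eq_integral_of_integral_rep hrep hint ⟨ha, hab.trans_lt hb⟩ ⟨ha.trans hab, hb⟩
  have hpos := intervalIntegral.integral_nonneg_of_ae_restrict hab
    ((ae_restrict_iff' measurableSet_Icc).2 hf')
  linarith

theorem le_of_integral_rep_of_ae_nonpos
    (hrep : ∀ τ ∈ Ico (0 : ℝ) T, f τ = f 0 + ∫ s in (0 : ℝ)..τ, f' s)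
    (hint : ∀ τ ∈ Ico (0 : ℝ) T, IntervalIntegrable f' volume 0 τ)
    (ha : 0 ≤ a) (hab : a ≤ b) (hb : b < T) (hf' : ∀ᵐ s, s ∈ Icc a b → f' s ≤ 0) :
    f b ≤ f a := by
  have hsub := sub_eq_integral_of_integral_rep hrep hint ⟨ha, hab.trans_lt hb⟩ ⟨ha.trans hab, hb⟩
  have hneg := intervalIntegral.integral_nonneg_of_ae_restrict hab
    ((ae_restrict_iff' measurableSet_Icc).2 (hf'.mono fun s hs hsI => neg_nonneg.2 (hs hsI)))
  rw [intervalIntegral.integral_neg] at hneg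
  linarith

end IntegralRepresentation

section Bootstrap

variable {T C m a b : ℝ} {G γ g γ' : ℝ → ℝ}

theorem modulation_le_of_forall_Icc (hC : 1 ≤ C) (hm : 1 ≤ m)
    (hγAC : ∀ τ ∈ Ico (0 : ℝ) T, γ τ = γ 0 + ∫ s in (0 : ℝ)..τ, γ' s)
    (hγint : ∀ τ ∈ Ico (0 : ℝ) T, IntervalIntegrable γ' volume 0 τ)
    (hγ' : ∀ᵐ τ, τ ∈ Ico (0 : ℝ) T → |γ' τ - 1| ≤ 4 * m * C * G τ / γ τ)
    (ha : 0 ≤ a) (hab : a ≤ b) (hb : b < T)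
    (hgood : ∀ s ∈ Icc a b, G s ≤ 101 * C ∧ 9999 * m * C ^ 2 ≤ γ s) : γ a ≤ γ b :=
  le_of_integral_rep_of_ae_nonneg hγAC hγint ha hab hb <| hγ'.mono fun s hs hsI =>
    nonneg_of_abs_sub_one_le hC hm (hgood s hsI).1 (hgood s hsI).2
      (hs ⟨ha.trans hsI.1, hsI.2.trans_lt hb⟩)

theorem energy_le_of_forall_Icc (hC : 1 ≤ C) (hm : 1 ≤ m)
    (hGAC : ∀ τ ∈ Ico (0 : ℝ) T, G τ = G 0 + ∫ s in (0 : ℝ)..τ, g s)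
    (hGint : ∀ τ ∈ Ico (0 : ℝ) T, IntervalIntegrable g volume 0 τ)
    (hg : ∀ᵐ τ, τ ∈ Ico (0 : ℝ) T →
      g τ ≤ (-1 / 10 + 2 * C / γ τ) * G τ + C
        + 8 * m * C * (G τ) ^ 2 * (1 / γ τ + 1 / (γ τ) ^ 2))
    (ha : 0 ≤ a) (hab : a ≤ b) (hb : b < T)
    (hhot : ∀ s ∈ Icc a b, 98 * C ≤ G s ∧ G s ≤ 101 * C ∧ 9999 * m * C ^ 2 ≤ γ s) :
    G b ≤ G a :=
  le_of_integral_rep_of_ae_nonpos hGAC hGint ha hab hb <| hg.mono fun s hs hsI =>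
    (hs ⟨ha.trans hsI.1, hsI.2.trans_lt hb⟩).trans <|
      energy_rhs_nonpos hC hm (hhot s hsI).1 (hhot s hsI).2.1 (hhot s hsI).2.2

theorem eventually_bootstrap_bounds {M x : ℝ} (hC : 1 ≤ C) (hm : 1 ≤ m)
    (hGcont : ContinuousOn G (Ico 0 T)) (hγcont : ContinuousOn γ (Ico 0 T))
    (hγAC : ∀ τ ∈ Ico (0 : ℝ) T, γ τ = γ 0 + ∫ s in (0 : ℝ)..τ, γ' s)
    (hGAC : ∀ τ ∈ Ico (0 : ℝ) T, G τ = G 0 + ∫ s in (0 : ℝ)..τ, g s)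
    (hγint : ∀ τ ∈ Ico (0 : ℝ) T, IntervalIntegrable γ' volume 0 τ)
    (hGint : ∀ τ ∈ Ico (0 : ℝ) T, IntervalIntegrable g volume 0 τ)
    (hγ0 : 10000 * m * C ^ 2 ≤ γ 0)
    (hγ' : ∀ᵐ τ, τ ∈ Ico (0 : ℝ) T → |γ' τ - 1| ≤ 4 * m * C * G τ / γ τ)
    (hg : ∀ᵐ τ, τ ∈ Ico (0 : ℝ) T →
      g τ ≤ (-1 / 10 + 2 * C / γ τ) * G τ + C
        + 8 * m * C * (G τ) ^ 2 * (1 / γ τ + 1 / (γ τ) ^ 2))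
    (hMlo : 99 * C ≤ M) (hMhi : M ≤ 100 * C)
    (hx : x ∈ Ico 0 T) (hGx : G x ≤ M) (hγx : γ 0 ≤ γ x) :
    ∀ᶠ s in 𝓝[>] x, G s ≤ M ∧ γ 0 ≤ γ s := by
  have hmC : 1 ≤ m * C ^ 2 := by nlinarith
  have hT : ∀ᶠ u in 𝓝[≥] x, u ∈ Ico 0 T :=
    mem_of_superset (Ico_mem_nhdsGE hx.2) (Ico_subset_Ico_left hx.1)
  have hGx' := (hGcont x hx).mono_of_mem_nhdsWithin hT
  have hγx' := (hγcont x hx).mono_of_mem_nhdsWithin hT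
  have hnear : ∀ᶠ u in 𝓝[≥] x, u ∈ Ico 0 T ∧ G x - C / 2 < G u ∧ G u < G x + C / 2 ∧
      γ x - 1 < γ u :=
    hT.and <| (hGx'.eventually_const_lt (by linarith)).and <|
      (hGx'.eventually_lt_const (by linarith)).and (hγx'.eventually_const_lt (by linarith))
  filter_upwards [nhdsWithin_mono x Ioi_subset_Ici_self hnear.forall_Icc_nhdsGE,
    self_mem_nhdsWithin] with s hs hxs
  have hγs : γ x ≤ γ s := modulation_le_of_forall_Icc hC hm hγAC hγint hγ' hx.1 hxs.le
    (hs s ⟨hxs.le, le_rfl⟩).1.2 fun u hu => by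
      obtain ⟨-, -, hGu, hγu⟩ := hs u hu
      constructor <;> linarith
  refine ⟨?_, hγx.trans hγs⟩
  by_cases hlow : G x + C / 2 ≤ M
  · linarith [(hs s ⟨hxs.le, le_rfl⟩).2.2.1]
  · refine (energy_le_of_forall_Icc hC hm hGAC hGint hg hx.1 hxs.le
      (hs s ⟨hxs.le, le_rfl⟩).1.2 fun u hu => ?_).trans hGx
    obtain ⟨-, hGu, hGu', hγu⟩ := hs u hu
    exact ⟨by linarith, by linarith, by linarith⟩

end Bootstrap

/-- Bootstrap lemma: if `γ(0) ≥ 10000 n C²`, `G(0) < 100C`, `|γ' - 1| ≤ 4nC G/γ` a.e. and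
`G' ≤ (-1/10 + 2C/γ)G + C + 8nC G²(1/γ + 1/γ²)` a.e., then for all `τ ∈ [0, T)`,
`G(τ) < 100C` and `γ(τ) ≥ γ(0)`. Absolute continuity is encoded by the integral
representations of `G` and `γ`. -/
theorem bootstrap_lemma (T : ℝ) (G γ g γ' : ℝ → ℝ) (C : ℝ) (n : ℕ)
    (hC : 1 ≤ C) (hn : 1 ≤ n)
    (hGcont : ContinuousOn G (Set.Ico 0 T))
    (hγcont : ContinuousOn γ (Set.Ico 0 T))
    (hγAC : ∀ τ ∈ Set.Ico (0 : ℝ) T, γ τ = γ 0 + ∫ s in (0 : ℝ)..τ, γ' s)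
    (hGAC : ∀ τ ∈ Set.Ico (0 : ℝ) T, G τ = G 0 + ∫ s in (0 : ℝ)..τ, g s)
    (hγint : ∀ τ ∈ Set.Ico (0 : ℝ) T, IntervalIntegrable γ' volume 0 τ)
    (hGint : ∀ τ ∈ Set.Ico (0 : ℝ) T, IntervalIntegrable g volume 0 τ)
    (hγ0 : γ 0 ≥ 10000 * n * C ^ 2)
    (hG0 : G 0 < 100 * C)
    (hγ' : ∀ᵐ τ, τ ∈ Set.Ico (0 : ℝ) T →
      |γ' τ - 1| ≤ 4 * n * C * G τ / γ τ)
    (hg : ∀ᵐ τ, τ ∈ Set.Ico (0 : ℝ) T →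
      g τ ≤ (-1 / 10 + 2 * C / γ τ) * G τ + C
        + 8 * n * C * (G τ) ^ 2 * (1 / γ τ + 1 / (γ τ) ^ 2)) :
    ∀ τ ∈ Set.Ico (0 : ℝ) T, G τ < 100 * C ∧ γ 0 ≤ γ τ := by
  set M := max (G 0) (99 * C)
  have hM : M < 100 * C := max_lt hG0 (by linarith)
  have hclosed : ∀ τ ∈ Ico 0 T, IsClosed ({u | G u ≤ M ∧ γ 0 ≤ γ u} ∩ Icc 0 τ) := by
    intro τ hτ
    have hsub : Icc 0 τ ⊆ Ico 0 T := Icc_subset_Ico_right hτ.2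
    convert (isClosed_Icc.isClosed_le (hGcont.mono hsub) continuousOn_const).inter
      (isClosed_Icc.isClosed_le continuousOn_const (hγcont.mono hsub)) using 1
    ext u
    simp only [mem_inter_iff, mem_ofPred_eq]
    tauto
  have hinv := Ico_subset_of_forall_mem_nhdsGT hclosed ⟨le_max_left _ _, le_rfl⟩
    fun x ⟨⟨hGx, hγx⟩, hx⟩ => eventually_bootstrap_bounds hC (Nat.one_le_cast.2 hn)
      hGcont hγcont hγAC hGAC hγint hGint hγ0 hγ' hg (le_max_right _ _) hM.le hx hGx hγx
  exact fun τ hτ => ⟨(hinv hτ).1.trans_lt hM, (hinv hτ).2⟩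
end

section
/- Let γ : [0, ∞) → ℝ be absolutely continuous with γ(0) > 0 and |γ'(τ) - 1| ≤ A/γ(τ) a.e. for some constant A > 0, with γ(τ) ≥ γ(0) for all τ and γ(0)² > 4A·γ(0) (i.e., γ stays positive and growing). Then γ(τ)/τ → 1 as τ → ∞. -/
open MeasureTheory Filter

/-- Asymptotics of the inverse viscosity parameter: if `γ` is absolutely continuous with
`|γ' - 1| ≤ A/γ` a.e., `γ ≥ γ(0) > 0` and `γ(0)² > 4Aγ(0)`, then `γ(τ)/τ → 1`. -/
theorem gamma_asymptotics (γ γ' : ℝ → ℝ) (A : ℝ) (hA : 0 < A) (h0 : 0 < γ 0)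
    (hAC : ∀ τ : ℝ, 0 ≤ τ → γ τ = γ 0 + ∫ s in (0 : ℝ)..τ, γ' s)
    (hint : ∀ τ : ℝ, 0 ≤ τ → IntervalIntegrable γ' volume 0 τ)
    (hineq : ∀ᵐ τ, 0 ≤ τ → |γ' τ - 1| ≤ A / γ τ)
    (hmono : ∀ τ : ℝ, 0 ≤ τ → γ 0 ≤ γ τ)
    (hbig : 4 * A * γ 0 < (γ 0) ^ 2) :
    Tendsto (fun τ => γ τ / τ) atTop (nhds 1) := by
  set c : ℝ := 1 - A / γ 0 with hc
  have hA4 : A / γ 0 < 1 / 4 := by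
    rw [div_lt_iff₀ h0]; nlinarith
  have hcpos : 0 < c := by
    have : A / γ 0 < 1 := by linarith
    simp only [hc]; linarith
  -- Pointwise a.e. bound on γ'
  have haebound : ∀ᵐ s, 0 ≤ s → (c ≤ γ' s ∧ |γ' s - 1| ≤ A / γ s) := by
    filter_upwards [hineq] with s hs hs0
    have h1 := hs hs0
    have hγs : γ 0 ≤ γ s := hmono s hs0
    have hγspos : 0 < γ s := lt_of_lt_of_le h0 hγs
    have h2 : A / γ s ≤ A / γ 0 := by
      apply div_le_div_of_nonneg_left hA.le h0 hγs
    constructor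
    · have := abs_le.1 h1
      simp only [hc]; linarith [this.1]
    · exact h1
  -- Step 1: linear lower bound
  have hlow : ∀ τ : ℝ, 0 ≤ τ → γ 0 + c * τ ≤ γ τ := by
    intro τ hτ
    rw [hAC τ hτ]
    have hι : (c * τ) = ∫ _ in (0:ℝ)..τ, c := by
      simp [intervalIntegral.integral_const]; ring
    rw [hι]
    have hmon : (fun _ : ℝ => c) ≤ᵐ[volume.restrict (Set.Icc 0 τ)] γ' := by
      filter_upwards [ae_restrict_mem measurableSet_Icc,
        ae_restrict_of_ae haebound] with s hsmem hs
      exact (hs hsmem.1).1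
    have := intervalIntegral.integral_mono_ae_restrict hτ
      (intervalIntegrable_const (c := c)) (hint τ hτ) hmon
    linarith
  -- positivity of γ 0 + c * s
  have hden : ∀ s : ℝ, 0 ≤ s → 0 < γ 0 + c * s := fun s hs => by positivity
  -- Integral of the dominating function
  have hintg : ∀ τ : ℝ, 0 ≤ τ →
      (∫ s in (0:ℝ)..τ, A / (γ 0 + c * s))
        = (A / c) * (Real.log (γ 0 + c * τ) - Real.log (γ 0)) := by
    intro τ hτ
    have hderiv : ∀ s ∈ Set.uIcc (0:ℝ) τ,
        HasDerivAt (fun u => (A / c) * Real.log (γ 0 + c * u)) (A / (γ 0 + c * s)) s := by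
      intro s hsmem
      rw [Set.uIcc_of_le hτ] at hsmem
      have hpos := hden s hsmem.1
      have h1 : HasDerivAt (fun u : ℝ => γ 0 + c * u) c s := by
        simpa using (hasDerivAt_id s).const_mul c |>.const_add (γ 0)
      have h2 := (h1.log hpos.ne')
      have h3 := h2.const_mul (A / c)
      rw [show A / (γ 0 + c * s) = A / c * (c / (γ 0 + c * s)) by field_simp]
      exact h3
    have hcont : ContinuousOn (fun s => A / (γ 0 + c * s)) (Set.uIcc (0:ℝ) τ) := by
      apply ContinuousOn.div continuousOn_const
      · fun_prop
      · intro s hsmem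
        rw [Set.uIcc_of_le hτ] at hsmem
        exact (hden s hsmem.1).ne'
    have := intervalIntegral.integral_eq_sub_of_hasDerivAt hderiv
      (hcont.intervalIntegrable)
    rw [this]
    ring_nf
  -- Step 2: logarithmic bound on |γ τ - (γ 0 + τ)|
  have hkey : ∀ τ : ℝ, 0 ≤ τ →
      |γ τ - (γ 0 + τ)| ≤ (A / c) * (Real.log (γ 0 + c * τ) - Real.log (γ 0)) := by
    intro τ hτ
    have heq : γ τ - (γ 0 + τ) = ∫ s in (0:ℝ)..τ, (γ' s - 1) := by
      rw [hAC τ hτ, intervalIntegral.integral_sub (hint τ hτ) intervalIntegrable_const]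
      simp
    rw [heq]
    have hgint : IntervalIntegrable (fun s => A / (γ 0 + c * s)) volume 0 τ := by
      apply ContinuousOn.intervalIntegrable
      apply ContinuousOn.div continuousOn_const
      · fun_prop
      · intro s hsmem
        rw [Set.uIcc_of_le hτ] at hsmem
        exact (hden s hsmem.1).ne'
    have habs : ∀ᵐ t ∂(volume.restrict (Set.uIoc (0:ℝ) τ)),
        ‖γ' t - 1‖ ≤ A / (γ 0 + c * t) := by
      filter_upwards [ae_restrict_mem measurableSet_uIoc,
        ae_restrict_of_ae haebound] with s hsmem hs
      rw [Set.uIoc_of_le hτ] at hsmem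
      have hs0 : (0:ℝ) ≤ s := hsmem.1.le
      have h1 := (hs hs0).2
      have h2 : γ 0 + c * s ≤ γ s := hlow s hs0
      have h3 : A / γ s ≤ A / (γ 0 + c * s) :=
        div_le_div_of_nonneg_left hA.le (hden s hs0) h2
      calc ‖γ' s - 1‖ = |γ' s - 1| := rfl
        _ ≤ A / γ s := h1
        _ ≤ A / (γ 0 + c * s) := h3
    have := intervalIntegral.norm_integral_le_abs_of_norm_le habs hgint
    rw [hintg τ hτ] at this
    calc |∫ s in (0:ℝ)..τ, (γ' s - 1)| = ‖∫ s in (0:ℝ)..τ, (γ' s - 1)‖ := rfl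
      _ ≤ |(A / c) * (Real.log (γ 0 + c * τ) - Real.log (γ 0))| := this
      _ = (A / c) * (Real.log (γ 0 + c * τ) - Real.log (γ 0)) := by
          apply abs_of_nonneg
          apply mul_nonneg (by positivity)
          have : Real.log (γ 0) ≤ Real.log (γ 0 + c * τ) :=
            Real.log_le_log h0 (by nlinarith)
          linarith
  -- Step 3: the bound tends to 0
  set B : ℝ → ℝ :=
    fun τ => (γ 0 + (A / c) * (Real.log (γ 0 + c * τ) - Real.log (γ 0))) / τ with hB
  have hBlim : Tendsto B atTop (nhds 0) := by
    have h1 : Tendsto (fun τ : ℝ => γ 0 + c * τ) atTop atTop := by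
      apply tendsto_atTop_add_const_left
      exact (tendsto_id.const_mul_atTop hcpos)
    have h2 : (fun τ : ℝ => Real.log (γ 0 + c * τ)) =o[atTop] (fun τ : ℝ => γ 0 + c * τ) :=
      Real.isLittleO_log_id_atTop.comp_tendsto h1
    have h3 : (fun τ : ℝ => γ 0 + c * τ) =O[atTop] (fun τ : ℝ => τ) := by
      rw [Asymptotics.isBigO_iff]
      refine ⟨γ 0 + c, ?_⟩
      filter_upwards [eventually_ge_atTop (1:ℝ)] with τ hτ
      have hτ0 : (0:ℝ) ≤ τ := by linarith
      rw [Real.norm_eq_abs, Real.norm_eq_abs, abs_of_nonneg (by positivity),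
        abs_of_nonneg hτ0]
      nlinarith
    have h4 : Tendsto (fun τ : ℝ => Real.log (γ 0 + c * τ) / τ) atTop (nhds 0) :=
      (h2.trans_isBigO h3).tendsto_div_nhds_zero
    have h5 : Tendsto (fun τ : ℝ =>
        (γ 0 - (A / c) * Real.log (γ 0)) / τ + (A / c) * (Real.log (γ 0 + c * τ) / τ))
        atTop (nhds 0) := by
      have := (tendsto_const_nhds (x := γ 0 - (A / c) * Real.log (γ 0))
        (f := atTop (α := ℝ))).div_atTop tendsto_id
      simpa using this.add (h4.const_mul (A / c))
    apply h5.congr'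
    filter_upwards [eventually_gt_atTop (0:ℝ)] with τ hτ
    simp only [hB]
    field_simp
    ring
  -- Conclusion
  rw [← tendsto_sub_nhds_zero_iff]
  apply squeeze_zero_norm' _ hBlim
  filter_upwards [eventually_gt_atTop (0:ℝ)] with τ hτ
  have hτ0 : (0:ℝ) ≤ τ := hτ.le
  have h1 := hkey τ hτ0
  have h2 : |γ τ - τ| ≤ γ 0 + (A / c) * (Real.log (γ 0 + c * τ) - Real.log (γ 0)) := by
    have : |γ τ - τ| ≤ |γ τ - (γ 0 + τ)| + |γ 0| := by
      have := abs_sub_abs_le_abs_sub (γ τ - τ) (γ 0)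
      calc |γ τ - τ| = |(γ τ - (γ 0 + τ)) + γ 0| := by ring_nf
        _ ≤ |γ τ - (γ 0 + τ)| + |γ 0| := abs_add_le _ _
    rw [abs_of_pos h0] at this
    linarith
  rw [Real.norm_eq_abs]
  have : γ τ / τ - 1 = (γ τ - τ) / τ := by field_simp
  rw [this, abs_div, abs_of_pos hτ]
  simp only [hB]
  gcongr
end

section
/- Let i ∈ ℝ and g : ℝⁿ → ℝ with ⟨x⟩ⁱ g ∈ L². Then for all 0 < t < 1, ‖⟨x⟩ⁱ (e^{tΔ} g)‖_{L²} ≤ C ‖⟨x⟩ⁱ g‖_{L²}, with C depending only on n and i; here e^{tΔ}g = K_t ∗ g. -/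
open MeasureTheory Real
open scoped ENNReal

private lemma peetre_aux {a b c i : ℝ} (ha : 1 ≤ a) (hb : 1 ≤ b) (hc : 1 ≤ c)
    (h1 : a ≤ Real.sqrt 2 * b * c) (h2 : c ≤ Real.sqrt 2 * a * b) :
    a ^ i ≤ 2 ^ (|i| / 2) * b ^ |i| * c ^ i := by
  have ha0 : (0:ℝ) < a := lt_of_lt_of_le one_pos ha
  have hb0 : (0:ℝ) < b := lt_of_lt_of_le one_pos hb
  have hc0 : (0:ℝ) < c := lt_of_lt_of_le one_pos hc
  have hs2 : Real.sqrt 2 = (2:ℝ) ^ ((1:ℝ)/2) := by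
    rw [Real.sqrt_eq_rpow]
  rcases le_or_gt 0 i with hi | hi
  · rw [abs_of_nonneg hi]
    calc a ^ i ≤ (Real.sqrt 2 * b * c) ^ i :=
          Real.rpow_le_rpow ha0.le h1 hi
      _ = (Real.sqrt 2) ^ i * b ^ i * c ^ i := by
          rw [Real.mul_rpow (by positivity) hc0.le, Real.mul_rpow (by positivity) hb0.le]
      _ = 2 ^ (i/2) * b ^ i * c ^ i := by
          rw [hs2, ← Real.rpow_mul (by norm_num)]
          ring_nf
  · set j : ℝ := -i with hj
    have hj0 : 0 < j := by simpa [hj] using hi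
    have habs : |i| = j := abs_of_neg hi
    have hkey : c ^ j ≤ 2 ^ (j/2) * a ^ j * b ^ j := by
      calc c ^ j ≤ (Real.sqrt 2 * a * b) ^ j := Real.rpow_le_rpow hc0.le h2 hj0.le
        _ = (Real.sqrt 2) ^ j * a ^ j * b ^ j := by
            rw [Real.mul_rpow (by positivity) hb0.le, Real.mul_rpow (by positivity) ha0.le]
        _ = 2 ^ (j/2) * a ^ j * b ^ j := by
            rw [hs2, ← Real.rpow_mul (by norm_num)]
            ring_nf
    have hi' : i = -j := by rw [hj]; ring
    have h3 : (0:ℝ) < c ^ j := by positivity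
    have h4 : (0:ℝ) < a ^ j := by positivity
    have h6 : 2 ^ (j/2) * b ^ j * (c ^ j)⁻¹ = (2 ^ (j/2) * b ^ j) / (c ^ j) := by
      ring
    rw [habs, hi', Real.rpow_neg ha0.le, Real.rpow_neg hc0.le, h6, ← one_div,
      div_le_div_iff₀ h4 h3]
    nlinarith [hkey]

private lemma sqrt_one_add_sq_le {V : Type*} [NormedAddCommGroup V] (x y : V) :
    Real.sqrt (1 + ‖x‖ ^ 2) ≤ Real.sqrt 2 * Real.sqrt (1 + ‖y‖ ^ 2) * Real.sqrt (1 + ‖x - y‖ ^ 2) := by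
  have h2 : Real.sqrt 2 * Real.sqrt (1 + ‖y‖ ^ 2) * Real.sqrt (1 + ‖x - y‖ ^ 2)
      = Real.sqrt (2 * (1 + ‖y‖ ^ 2) * (1 + ‖x - y‖ ^ 2)) := by
    rw [← Real.sqrt_mul (by norm_num), ← Real.sqrt_mul (by positivity)]
  rw [h2]
  apply Real.sqrt_le_sqrt
  have htri : ‖x‖ ≤ ‖y‖ + ‖x - y‖ := by
    calc ‖x‖ = ‖y + (x - y)‖ := by rw [add_sub_cancel]
      _ ≤ ‖y‖ + ‖x - y‖ := norm_add_le _ _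
  nlinarith [norm_nonneg x, norm_nonneg y, norm_nonneg (x - y), sq_nonneg (‖y‖ - ‖x - y‖)]

private lemma one_le_sqrt_one_add_sq {V : Type*} [NormedAddCommGroup V] (x : V) :
    1 ≤ Real.sqrt (1 + ‖x‖ ^ 2) := by
  have h := Real.sqrt_le_sqrt (show (1:ℝ) ≤ 1 + ‖x‖ ^ 2 by nlinarith [sq_nonneg ‖x‖])
  rwa [Real.sqrt_one] at h

private lemma peetre {V : Type*} [NormedAddCommGroup V] (i : ℝ) (x y : V) :
    Real.sqrt (1 + ‖x‖ ^ 2) ^ i ≤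
      2 ^ (|i| / 2) * Real.sqrt (1 + ‖y‖ ^ 2) ^ |i| * Real.sqrt (1 + ‖x - y‖ ^ 2) ^ i := by
  apply peetre_aux (one_le_sqrt_one_add_sq x) (one_le_sqrt_one_add_sq y)
    (one_le_sqrt_one_add_sq (x - y)) (sqrt_one_add_sq_le x y)
  have := sqrt_one_add_sq_le (x - y) (-y)
  simpa [norm_neg, sub_neg_eq_add, sub_add_cancel, mul_comm, mul_left_comm, mul_assoc] using this

private lemma kernel_bound (m : ℕ) {t r : ℝ} (ht : 0 < t) (ht1 : t ≤ 1) (hr : 0 ≤ r) :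
    (1 + r) ^ m * Real.exp (-r / (4 * t)) ≤
      (8 ^ m * (m.factorial : ℝ) * Real.exp (1/8)) * Real.exp (-r / (8 * t)) := by
  have hfac : (0:ℝ) < (m.factorial : ℝ) := by exact_mod_cast m.factorial_pos
  have h1 : ((1 + r) / 8) ^ m / (m.factorial : ℝ) ≤ Real.exp ((1 + r) / 8) :=
    Real.pow_div_factorial_le_exp _ (by positivity) m
  have h2 : (1 + r) ^ m ≤ 8 ^ m * (m.factorial : ℝ) * (Real.exp (1/8) * Real.exp (r/8)) := by
    rw [div_pow] at h1
    have h8 : (0:ℝ) < (8:ℝ) ^ m := by positivity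
    rw [← Real.exp_add] at *
    have := h1
    rw [div_div, div_le_iff₀ (by positivity)] at this
    calc (1 + r) ^ m ≤ Real.exp ((1 + r)/8) * ((8:ℝ)^m * (m.factorial : ℝ)) := this
      _ = 8 ^ m * (m.factorial : ℝ) * Real.exp (1/8 + r/8) := by rw [show (1+r)/8 = 1/8 + r/8 by ring]; ring
  have h3 : Real.exp (-r / (4 * t)) = Real.exp (-r / (8 * t)) * Real.exp (-r / (8 * t)) := by
    rw [← Real.exp_add]
    congr 1
    field_simp
    ring
  have h4 : Real.exp (-r / (8 * t)) ≤ Real.exp (-r / 8) := by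
    apply Real.exp_le_exp.mpr
    rw [neg_div, neg_div, neg_le_neg_iff]
    calc r / 8 = r / (8 * 1) := by norm_num
      _ ≤ r / (8 * t) := by
        apply div_le_div_of_nonneg_left hr (by positivity)
        nlinarith
  have hexp1 : (0:ℝ) < Real.exp (-r / (8 * t)) := Real.exp_pos _
  calc (1 + r) ^ m * Real.exp (-r / (4 * t))
      = (1 + r) ^ m * Real.exp (-r / (8 * t)) * Real.exp (-r / (8 * t)) := by rw [h3]; ring
    _ ≤ (1 + r) ^ m * Real.exp (-r / 8) * Real.exp (-r / (8 * t)) := by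
        apply mul_le_mul_of_nonneg_right _ hexp1.le
        exact mul_le_mul_of_nonneg_left h4 (by positivity)
    _ ≤ (8 ^ m * (m.factorial : ℝ) * (Real.exp (1/8) * Real.exp (r/8))) * Real.exp (-r / 8)
          * Real.exp (-r / (8 * t)) := by
        apply mul_le_mul_of_nonneg_right _ hexp1.le
        exact mul_le_mul_of_nonneg_right h2 (Real.exp_pos _).le
    _ = (8 ^ m * (m.factorial : ℝ) * Real.exp (1/8)) * Real.exp (-r / (8 * t)) := by
        have h23 : Real.exp (r/8) * Real.exp (-r/8) = 1 := by
          rw [← Real.exp_add, show r/8 + -r/8 = 0 by ring, Real.exp_zero]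
        linear_combination (8 ^ m * (m.factorial : ℝ) * Real.exp (1/8) *
          Real.exp (-r/(8*t))) * h23

private lemma integrable_gauss (n : ℕ) {b : ℝ} (hb : 0 < b) :
    Integrable (fun v : EuclideanSpace ℝ (Fin n) => Real.exp (-b * ‖v‖ ^ 2)) := by
  have h := (GaussianFourier.integrable_cexp_neg_mul_sq_norm_add
    (V := EuclideanSpace ℝ (Fin n)) (b := (b:ℂ)) (by simpa using hb) 0 0).norm
  have : ∀ v : EuclideanSpace ℝ (Fin n),
      ‖Complex.exp (-(b:ℂ) * (‖v‖:ℂ) ^ 2 + 0 * ((inner ℝ 0 v : ℝ):ℂ))‖ = Real.exp (-b * ‖v‖ ^ 2) := by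
    intro v
    rw [Complex.norm_exp]
    simp [← Complex.ofReal_pow]
  exact h.congr (Filter.Eventually.of_forall fun v => (this v))

private lemma lintegral_gauss (n : ℕ) {b : ℝ} (hb : 0 < b) :
    ∫⁻ v : EuclideanSpace ℝ (Fin n), ENNReal.ofReal (Real.exp (-b * ‖v‖ ^ 2)) =
      ENNReal.ofReal ((π / b) ^ ((n : ℝ) / 2)) := by
  rw [← MeasureTheory.ofReal_integral_eq_lintegral_ofReal (integrable_gauss n hb)
    (Filter.Eventually.of_forall fun v => (Real.exp_pos _).le)]
  congr 1
  rw [GaussianFourier.integral_rexp_neg_mul_sq_norm hb]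
  simp

private noncomputable def wt (i : ℝ) {n : ℕ} (x : EuclideanSpace ℝ (Fin n)) : ℝ :=
  Real.sqrt (1 + ‖x‖ ^ 2) ^ i

private noncomputable def ker (n : ℕ) (t : ℝ) (y : EuclideanSpace ℝ (Fin n)) : ℝ :=
  (4 * Real.pi * t) ^ (-(n : ℝ) / 2) * Real.exp (-‖y‖ ^ 2 / (4 * t))

private noncomputable def Cb (i : ℝ) (n : ℕ) : ℝ :=
  8 ^ (⌈|i| / 2⌉₊) * ((⌈|i| / 2⌉₊).factorial : ℝ) * Real.exp (1/8) * 2 ^ ((n : ℝ) / 2)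

private lemma Cb_pos (i : ℝ) (n : ℕ) : 0 < Cb i n := by
  have : (0:ℝ) < ((⌈|i| / 2⌉₊).factorial : ℝ) := by exact_mod_cast Nat.factorial_pos _
  unfold Cb
  positivity

private lemma wt_pos (i : ℝ) {n : ℕ} (x : EuclideanSpace ℝ (Fin n)) : 0 < wt i x :=
  Real.rpow_pos_of_pos (lt_of_lt_of_le one_pos (one_le_sqrt_one_add_sq x)) i

private lemma ker_nonneg (n : ℕ) {t : ℝ} (ht : 0 < t) (y : EuclideanSpace ℝ (Fin n)) :
    0 ≤ ker n t y := by
  unfold ker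
  have : (0:ℝ) < 4 * Real.pi * t := by positivity
  positivity

private lemma meas_wt (i : ℝ) (n : ℕ) : Measurable (wt i (n := n)) := by
  unfold wt
  fun_prop

private lemma meas_ker (n : ℕ) (t : ℝ) : Measurable (ker n t) := by
  unfold ker
  fun_prop

private lemma lintegral_H_le (n : ℕ) (i : ℝ) {t : ℝ} (ht : 0 < t) (ht1 : t ≤ 1) :
    ∫⁻ y : EuclideanSpace ℝ (Fin n), ENNReal.ofReal (wt |i| y * ker n t y) ≤
      ENNReal.ofReal (Cb i n) := by
  set m : ℕ := ⌈|i| / 2⌉₊ with hm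
  set B : ℝ := 8 ^ m * (m.factorial : ℝ) * Real.exp (1/8) with hB
  have hπt : (0:ℝ) < 4 * Real.pi * t := by positivity
  have hBpos : (0:ℝ) < B := by
    have : (0:ℝ) < (m.factorial : ℝ) := by exact_mod_cast Nat.factorial_pos _
    positivity
  -- pointwise bound
  have hpt : ∀ y : EuclideanSpace ℝ (Fin n), wt |i| y * ker n t y ≤
      (B * (4 * Real.pi * t) ^ (-(n : ℝ) / 2)) * Real.exp (-(1/(8*t)) * ‖y‖ ^ 2) := by
    intro y
    have h1 : wt |i| y ≤ (1 + ‖y‖ ^ 2) ^ m := by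
      unfold wt
      have hb : (1:ℝ) ≤ 1 + ‖y‖ ^ 2 := by nlinarith [sq_nonneg ‖y‖]
      rw [Real.sqrt_eq_rpow, ← Real.rpow_natCast (1 + ‖y‖ ^ 2) m,
        ← Real.rpow_mul (by linarith)]
      apply Real.rpow_le_rpow_of_exponent_le hb
      calc (1/2) * |i| = |i| / 2 := by ring
        _ ≤ (m : ℝ) := Nat.le_ceil _
    have h2 : (1 + ‖y‖ ^ 2) ^ m * Real.exp (-‖y‖ ^ 2 / (4 * t)) ≤
        B * Real.exp (-‖y‖ ^ 2 / (8 * t)) :=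
      kernel_bound m ht ht1 (sq_nonneg ‖y‖)
    have h3 : -(1/(8*t)) * ‖y‖ ^ 2 = -‖y‖ ^ 2 / (8 * t) := by field_simp
    rw [h3]
    have hexp : (0:ℝ) < Real.exp (-‖y‖ ^ 2 / (4 * t)) := Real.exp_pos _
    have hker : ker n t y = (4 * Real.pi * t) ^ (-(n : ℝ) / 2) *
        Real.exp (-‖y‖ ^ 2 / (4 * t)) := rfl
    rw [hker]
    have hpow : (0:ℝ) < (4 * Real.pi * t) ^ (-(n : ℝ) / 2) := Real.rpow_pos_of_pos hπt _
    calc wt |i| y * ((4 * Real.pi * t) ^ (-(n : ℝ) / 2) * Real.exp (-‖y‖ ^ 2 / (4 * t)))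
        ≤ (1 + ‖y‖ ^ 2) ^ m * ((4 * Real.pi * t) ^ (-(n : ℝ) / 2) *
            Real.exp (-‖y‖ ^ 2 / (4 * t))) := by
          apply mul_le_mul_of_nonneg_right h1 (by positivity)
      _ = (4 * Real.pi * t) ^ (-(n : ℝ) / 2) *
            ((1 + ‖y‖ ^ 2) ^ m * Real.exp (-‖y‖ ^ 2 / (4 * t))) := by ring
      _ ≤ (4 * Real.pi * t) ^ (-(n : ℝ) / 2) * (B * Real.exp (-‖y‖ ^ 2 / (8 * t))) := by
          apply mul_le_mul_of_nonneg_left h2 hpow.le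
      _ = (B * (4 * Real.pi * t) ^ (-(n : ℝ) / 2)) * Real.exp (-‖y‖ ^ 2 / (8 * t)) := by ring
  calc ∫⁻ y, ENNReal.ofReal (wt |i| y * ker n t y)
      ≤ ∫⁻ y : EuclideanSpace ℝ (Fin n), ENNReal.ofReal ((B * (4 * Real.pi * t) ^ (-(n : ℝ) / 2)) *
          Real.exp (-(1/(8*t)) * ‖y‖ ^ 2)) :=
        lintegral_mono fun y => ENNReal.ofReal_le_ofReal (hpt y)
    _ = ENNReal.ofReal (B * (4 * Real.pi * t) ^ (-(n : ℝ) / 2)) *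
          ∫⁻ y : EuclideanSpace ℝ (Fin n), ENNReal.ofReal (Real.exp (-(1/(8*t)) * ‖y‖ ^ 2)) := by
        rw [← lintegral_const_mul' _ _ ENNReal.ofReal_ne_top]
        congr 1
        funext y
        rw [← ENNReal.ofReal_mul (by positivity)]
    _ = ENNReal.ofReal (B * (4 * Real.pi * t) ^ (-(n : ℝ) / 2)) *
          ENNReal.ofReal ((π / (1/(8*t))) ^ ((n : ℝ) / 2)) := by
        rw [lintegral_gauss n (by positivity : (0:ℝ) < 1/(8*t))]
    _ = ENNReal.ofReal (Cb i n) := by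
        rw [← ENNReal.ofReal_mul (by positivity)]
        congr 1
        have hdiv : π / (1/(8*t)) = 2 * (4 * Real.pi * t) := by
          field_simp
          ring
        rw [hdiv, Real.mul_rpow (by norm_num) hπt.le]
        have hneg : (-(n : ℝ) / 2) = -((n : ℝ) / 2) := by ring
        rw [hneg, Real.rpow_neg hπt.le]
        have hne : (4 * Real.pi * t) ^ ((n : ℝ) / 2) ≠ 0 :=
          ne_of_gt (Real.rpow_pos_of_pos hπt _)
        unfold Cb
        rw [← hm, ← hB]
        field_simp

private lemma main_aux (n : ℕ) (i : ℝ) {t : ℝ} (ht : 0 < t) (ht1 : t ≤ 1)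
    {g : EuclideanSpace ℝ (Fin n) → ℝ} (hg : StronglyMeasurable g) :
    ∫⁻ x : EuclideanSpace ℝ (Fin n),
        ENNReal.ofReal |wt i x * ∫ y, ker n t y * g (x - y)| ^ 2 ≤
      (ENNReal.ofReal ((2:ℝ) ^ (|i| / 2)) * ENNReal.ofReal (Cb i n)) ^ 2 *
        ∫⁻ z : EuclideanSpace ℝ (Fin n), ENNReal.ofReal |wt i z * g z| ^ 2 := by
  set A : ℝ := (2:ℝ) ^ (|i| / 2) with hA
  have hA0 : (0:ℝ) < A := Real.rpow_pos_of_pos (by norm_num) _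
  set u : EuclideanSpace ℝ (Fin n) → ℝ≥0∞ := fun z => ENNReal.ofReal |wt i z * g z| with hu
  set H : EuclideanSpace ℝ (Fin n) → ℝ≥0∞ :=
    fun y => ENNReal.ofReal (wt |i| y * ker n t y) with hH
  have hmu : Measurable u := by
    apply Measurable.ennreal_ofReal
    exact ((meas_wt i n).mul hg.measurable).abs
  have hmH : Measurable H := by
    apply Measurable.ennreal_ofReal
    exact (meas_wt |i| n).mul (meas_ker n t)
  have hHfin : ∫⁻ y, H y ≤ ENNReal.ofReal (Cb i n) := lintegral_H_le n i ht ht1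
  have hHne : ∫⁻ y, H y ≠ ⊤ :=
    ne_top_of_le_ne_top ENNReal.ofReal_ne_top hHfin
  -- Step 1: pointwise domination of the weighted convolution
  have step1 : ∀ x : EuclideanSpace ℝ (Fin n),
      ENNReal.ofReal |wt i x * ∫ y, ker n t y * g (x - y)| ≤
        ENNReal.ofReal A * ∫⁻ y, H y * u (x - y) := by
    intro x
    have hwx : (0:ℝ) ≤ wt i x := (wt_pos i x).le
    have e1 : ENNReal.ofReal |wt i x * ∫ y, ker n t y * g (x - y)| =
        ENNReal.ofReal (wt i x) * ENNReal.ofReal |∫ y, ker n t y * g (x - y)| := by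
      rw [abs_mul, abs_of_nonneg hwx, ENNReal.ofReal_mul hwx]
    have e2 : ENNReal.ofReal |∫ y, ker n t y * g (x - y)| ≤
        ∫⁻ y, ENNReal.ofReal |ker n t y * g (x - y)| := by
      calc ENNReal.ofReal |∫ y, ker n t y * g (x - y)|
          = (‖∫ y, ker n t y * g (x - y)‖₊ : ℝ≥0∞) := by
            rw [← Real.norm_eq_abs]; exact ofReal_norm_eq_enorm _
        _ ≤ ∫⁻ y, (‖ker n t y * g (x - y)‖₊ : ℝ≥0∞) :=
            MeasureTheory.enorm_integral_le_lintegral_enorm _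
        _ = ∫⁻ y, ENNReal.ofReal |ker n t y * g (x - y)| := by
            apply lintegral_congr
            intro y
            rw [← Real.norm_eq_abs]; exact (ofReal_norm_eq_enorm _).symm
    calc ENNReal.ofReal |wt i x * ∫ y, ker n t y * g (x - y)|
        ≤ ENNReal.ofReal (wt i x) * ∫⁻ y, ENNReal.ofReal |ker n t y * g (x - y)| := by
          rw [e1]; exact mul_le_mul_right e2 _
      _ = ∫⁻ y, ENNReal.ofReal (wt i x) * ENNReal.ofReal |ker n t y * g (x - y)| :=
          (lintegral_const_mul' _ _ ENNReal.ofReal_ne_top).symm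
      _ ≤ ∫⁻ y, ENNReal.ofReal A * (H y * u (x - y)) := by
          apply lintegral_mono
          intro y
          show ENNReal.ofReal (wt i x) * ENNReal.ofReal |ker n t y * g (x - y)| ≤
            ENNReal.ofReal A * (H y * u (x - y))
          rw [← ENNReal.ofReal_mul hwx]
          have hker := ker_nonneg n ht y
          have hreal : wt i x * |ker n t y * g (x - y)| ≤
              A * ((wt |i| y * ker n t y) * (wt i (x - y) * |g (x - y)|)) := by
            have hp : wt i x ≤ A * wt |i| y * wt i (x - y) := by
              unfold wt
              exact peetre i x y
            have h0 : (0:ℝ) ≤ ker n t y * |g (x - y)| := by positivity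
            calc wt i x * |ker n t y * g (x - y)|
                = wt i x * (ker n t y * |g (x - y)|) := by
                  rw [abs_mul, abs_of_nonneg hker]
              _ ≤ (A * wt |i| y * wt i (x - y)) * (ker n t y * |g (x - y)|) :=
                  mul_le_mul_of_nonneg_right hp h0
              _ = A * ((wt |i| y * ker n t y) * (wt i (x - y) * |g (x - y)|)) := by ring
          calc ENNReal.ofReal (wt i x * |ker n t y * g (x - y)|)
              ≤ ENNReal.ofReal (A * ((wt |i| y * ker n t y) * (wt i (x - y) * |g (x - y)|))) :=
                ENNReal.ofReal_le_ofReal hreal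
            _ = ENNReal.ofReal A * (H y * u (x - y)) := by
                rw [ENNReal.ofReal_mul hA0.le, ENNReal.ofReal_mul
                  (mul_nonneg (wt_pos |i| y).le (ker_nonneg n ht y))]
                congr 2
                simp only [hu]
                rw [abs_mul, abs_of_nonneg (wt_pos i (x - y)).le]
      _ = ENNReal.ofReal A * ∫⁻ y, H y * u (x - y) :=
          lintegral_const_mul' _ _ ENNReal.ofReal_ne_top
  -- Step 2: Cauchy-Schwarz
  have step2 : ∀ x : EuclideanSpace ℝ (Fin n),
      (∫⁻ y, H y * u (x - y)) ^ 2 ≤ (∫⁻ y, H y) * ∫⁻ y, H y * u (x - y) ^ 2 := by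
    intro x
    have hconj : Real.HolderConjugate 2 2 := Real.HolderConjugate.two_two
    have hCS := ENNReal.lintegral_mul_le_Lp_mul_Lq
      (volume : Measure (EuclideanSpace ℝ (Fin n))) hconj
      (f := fun y => H y ^ ((1:ℝ)/2))
      (g := fun y => H y ^ ((1:ℝ)/2) * u (x - y))
      ((hmH.pow_const _).aemeasurable)
      (((hmH.pow_const _).mul
        (hmu.comp (measurable_const.sub measurable_id))).aemeasurable)
    have hhalf : ∀ X : ℝ≥0∞, (X ^ ((1:ℝ)/2)) ^ (2:ℕ) = X := by
      intro X
      rw [← ENNReal.rpow_natCast (X ^ ((1:ℝ)/2)) 2, ← ENNReal.rpow_mul]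
      norm_num
    have hsplit : ∀ y : EuclideanSpace ℝ (Fin n),
        H y * u (x - y) = H y ^ ((1:ℝ)/2) * (H y ^ ((1:ℝ)/2) * u (x - y)) := by
      intro y
      rw [← mul_assoc,
        ← ENNReal.rpow_add_of_nonneg ((1:ℝ)/2) ((1:ℝ)/2) (by norm_num) (by norm_num)]
      norm_num
    have h1 : ∀ y : EuclideanSpace ℝ (Fin n), (H y ^ ((1:ℝ)/2)) ^ (2:ℝ) = H y := by
      intro y
      rw [← ENNReal.rpow_mul]
      norm_num
    have h2 : ∀ y : EuclideanSpace ℝ (Fin n),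
        (H y ^ ((1:ℝ)/2) * u (x - y)) ^ (2:ℝ) = H y * u (x - y) ^ 2 := by
      intro y
      rw [ENNReal.mul_rpow_of_nonneg _ _ (by norm_num : (0:ℝ) ≤ 2), h1 y,
        show ((2:ℝ)) = ((2:ℕ):ℝ) by norm_num, ENNReal.rpow_natCast]
    calc (∫⁻ y, H y * u (x - y)) ^ 2
        = (∫⁻ y, (fun y => H y ^ ((1:ℝ)/2)) y * (fun y => H y ^ ((1:ℝ)/2) * u (x - y)) y) ^ 2 := by
          congr 1
          apply lintegral_congr
          intro y
          exact hsplit y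
      _ ≤ ((∫⁻ y, (H y ^ ((1:ℝ)/2)) ^ (2:ℝ)) ^ ((1:ℝ)/2) *
            (∫⁻ y, (H y ^ ((1:ℝ)/2) * u (x - y)) ^ (2:ℝ)) ^ ((1:ℝ)/2)) ^ 2 := by
          rw [pow_two, pow_two]
          exact mul_le_mul' hCS hCS
      _ = (∫⁻ y, H y) * ∫⁻ y, H y * u (x - y) ^ 2 := by
          have e1 : ∫⁻ y, (H y ^ ((1:ℝ)/2)) ^ (2:ℝ) = ∫⁻ y, H y := lintegral_congr h1
          have e2 : ∫⁻ y, (H y ^ ((1:ℝ)/2) * u (x - y)) ^ (2:ℝ) =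
              ∫⁻ y, H y * u (x - y) ^ 2 := lintegral_congr h2
          rw [e1, e2, mul_pow, hhalf, hhalf]
  -- Step 3: Tonelli and translation invariance
  have hswap : ∫⁻ x : EuclideanSpace ℝ (Fin n), ∫⁻ y, H y * u (x - y) ^ 2 =
      (∫⁻ y, H y) * ∫⁻ z, u z ^ 2 := by
    rw [lintegral_lintegral_swap (((hmH.comp measurable_snd).mul
      (((hmu.comp (measurable_fst.sub measurable_snd))).pow_const 2)).aemeasurable)]
    have hinner : ∀ y : EuclideanSpace ℝ (Fin n),
        ∫⁻ x, H y * u (x - y) ^ 2 = H y * ∫⁻ z, u z ^ 2 := by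
      intro y
      have hyne : H y ≠ ⊤ := by simp only [hH]; exact ENNReal.ofReal_ne_top
      rw [lintegral_const_mul' _ _ hyne]
      congr 1
      exact (measurePreserving_sub_right volume y).lintegral_comp (hmu.pow_const 2)
    rw [lintegral_congr hinner, lintegral_mul_const _ hmH]
  have hcne : (ENNReal.ofReal A) ^ 2 * (∫⁻ y, H y) ≠ ⊤ :=
    ENNReal.mul_ne_top (ENNReal.pow_ne_top ENNReal.ofReal_ne_top) hHne
  calc ∫⁻ x : EuclideanSpace ℝ (Fin n),
        ENNReal.ofReal |wt i x * ∫ y, ker n t y * g (x - y)| ^ 2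
      ≤ ∫⁻ x : EuclideanSpace ℝ (Fin n), (ENNReal.ofReal A * ∫⁻ y, H y * u (x - y)) ^ 2 := by
        apply lintegral_mono
        intro x
        show ENNReal.ofReal |wt i x * ∫ y, ker n t y * g (x - y)| ^ 2 ≤
          (ENNReal.ofReal A * ∫⁻ y, H y * u (x - y)) ^ 2
        rw [pow_two, pow_two]
        exact mul_le_mul' (step1 x) (step1 x)
    _ ≤ ∫⁻ x : EuclideanSpace ℝ (Fin n), (ENNReal.ofReal A) ^ 2 *
          ((∫⁻ y, H y) * ∫⁻ y, H y * u (x - y) ^ 2) := by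
        apply lintegral_mono
        intro x
        show (ENNReal.ofReal A * ∫⁻ y, H y * u (x - y)) ^ 2 ≤
          ENNReal.ofReal A ^ 2 * ((∫⁻ y, H y) * ∫⁻ y, H y * u (x - y) ^ 2)
        rw [mul_pow]
        exact mul_le_mul_right (step2 x) _
    _ = ((ENNReal.ofReal A) ^ 2 * (∫⁻ y, H y)) *
          ∫⁻ x : EuclideanSpace ℝ (Fin n), ∫⁻ y, H y * u (x - y) ^ 2 := by
        rw [← lintegral_const_mul' _ _ hcne]
        apply lintegral_congr
        intro x
        ring
    _ = ((ENNReal.ofReal A) ^ 2 * (∫⁻ y, H y)) * ((∫⁻ y, H y) * ∫⁻ z, u z ^ 2) := by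
        rw [hswap]
    _ ≤ ((ENNReal.ofReal A) ^ 2 * ENNReal.ofReal (Cb i n)) *
          (ENNReal.ofReal (Cb i n) * ∫⁻ z, u z ^ 2) :=
        mul_le_mul' (mul_le_mul_right hHfin _) (mul_le_mul_left hHfin _)
    _ = (ENNReal.ofReal A * ENNReal.ofReal (Cb i n)) ^ 2 *
          ∫⁻ z : EuclideanSpace ℝ (Fin n), u z ^ 2 := by
        ring
    _ = (ENNReal.ofReal A * ENNReal.ofReal (Cb i n)) ^ 2 *
          ∫⁻ z : EuclideanSpace ℝ (Fin n), ENNReal.ofReal |wt i z * g z| ^ 2 := by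
        simp only [hu]

/-- Boundedness of the heat semigroup on polynomially weighted `L²`:
`‖⟨x⟩ⁱ e^{tΔ}g‖_{L²} ≤ C ‖⟨x⟩ⁱ g‖_{L²}` for `0 < t < 1`, `C = C(n, i)`. -/
theorem heat_semigroup_weighted_bound (n : ℕ) (i : ℝ) :
    ∃ C > 0, ∀ t : ℝ, 0 < t → t < 1 →
      ∀ g : EuclideanSpace ℝ (Fin n) → ℝ,
        AEStronglyMeasurable g volume →
        Integrable (fun x : EuclideanSpace ℝ (Fin n) =>
          (Real.sqrt (1 + ‖x‖ ^ 2) ^ i * g x) ^ 2) volume →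
        (∫ x : EuclideanSpace ℝ (Fin n),
            (Real.sqrt (1 + ‖x‖ ^ 2) ^ i *
              (∫ y : EuclideanSpace ℝ (Fin n),
                (4 * Real.pi * t) ^ (-(n : ℝ) / 2) * Real.exp (-‖y‖ ^ 2 / (4 * t)) *
                  g (x - y))) ^ 2) ^ ((1 : ℝ) / 2)
          ≤ C * (∫ x : EuclideanSpace ℝ (Fin n),
              (Real.sqrt (1 + ‖x‖ ^ 2) ^ i * g x) ^ 2) ^ ((1 : ℝ) / 2) := by
  have hA0 : (0:ℝ) < (2:ℝ) ^ (|i| / 2) := Real.rpow_pos_of_pos (by norm_num) _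
  have hCb := Cb_pos i n
  refine ⟨(2:ℝ) ^ (|i| / 2) * Cb i n, by positivity, ?_⟩
  intro t ht ht1 g hg hg2
  have hg' : StronglyMeasurable (hg.mk g) := hg.stronglyMeasurable_mk
  set g' : EuclideanSpace ℝ (Fin n) → ℝ := hg.mk g with hg'def
  have hgg' : g =ᵐ[volume] g' := hg.ae_eq_mk
  show (∫ x : EuclideanSpace ℝ (Fin n),
      (wt i x * ∫ y, ker n t y * g (x - y)) ^ 2) ^ ((1 : ℝ) / 2)
    ≤ (2:ℝ) ^ (|i| / 2) * Cb i n *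
      (∫ x : EuclideanSpace ℝ (Fin n), (wt i x * g x) ^ 2) ^ ((1 : ℝ) / 2)
  -- replace `g` by its strongly measurable representative inside integrals
  have hF : ∀ x : EuclideanSpace ℝ (Fin n),
      (∫ y, ker n t y * g (x - y)) = ∫ y, ker n t y * g' (x - y) := by
    intro x
    apply integral_congr_ae
    have h2 : (g ∘ fun y : EuclideanSpace ℝ (Fin n) => x - y) =ᵐ[volume]
        (g' ∘ fun y => x - y) :=
      (MeasureTheory.Measure.measurePreserving_sub_left volume x).quasiMeasurePreserving.ae_eq_comp
        hgg'
    exact h2.mono fun y hy => by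
      simp only [Function.comp] at hy
      simp only [hy]
  have hR : (fun x : EuclideanSpace ℝ (Fin n) => (wt i x * g x) ^ 2) =ᵐ[volume]
      (fun x => (wt i x * g' x) ^ 2) := hgg'.mono fun x hx => by simp only [hx]
  have hg2' : Integrable (fun x : EuclideanSpace ℝ (Fin n) => (wt i x * g' x) ^ 2) volume :=
    hg2.congr hR
  -- measurability of the convolution
  have hFmeas : StronglyMeasurable (fun x : EuclideanSpace ℝ (Fin n) =>
      ∫ y, ker n t y * g' (x - y)) := by
    apply MeasureTheory.StronglyMeasurable.integral_prod_right'
      (f := fun p : EuclideanSpace ℝ (Fin n) × EuclideanSpace ℝ (Fin n) =>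
        ker n t p.2 * g' (p.1 - p.2))
    exact (((meas_ker n t).comp measurable_snd).mul
      (hg'.measurable.comp (measurable_fst.sub measurable_snd))).stronglyMeasurable
  -- convert both sides to lower Lebesgue integrals
  set Q : ℝ≥0∞ := ∫⁻ z : EuclideanSpace ℝ (Fin n), ENNReal.ofReal |wt i z * g' z| ^ 2 with hQ
  set P : ℝ≥0∞ := ∫⁻ x : EuclideanSpace ℝ (Fin n),
    ENNReal.ofReal |wt i x * ∫ y, ker n t y * g' (x - y)| ^ 2 with hP
  have heq1 : ∫ x : EuclideanSpace ℝ (Fin n), (wt i x * ∫ y, ker n t y * g' (x - y)) ^ 2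
      = P.toReal := by
    rw [integral_eq_lintegral_of_nonneg_ae (f := fun x => (wt i x * ∫ y, ker n t y * g' (x - y)) ^ 2)
      (Filter.Eventually.of_forall fun x => sq_nonneg _)
      (((meas_wt i n).mul hFmeas.measurable).pow_const 2).aestronglyMeasurable]
    congr 1
    apply lintegral_congr
    intro x
    rw [← sq_abs, ENNReal.ofReal_pow (abs_nonneg _)]
  have heq2 : ∫ x : EuclideanSpace ℝ (Fin n), (wt i x * g' x) ^ 2 = Q.toReal := by
    rw [integral_eq_lintegral_of_nonneg_ae (f := fun x => (wt i x * g' x) ^ 2)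
      (Filter.Eventually.of_forall fun x => sq_nonneg _)
      (((meas_wt i n).mul hg'.measurable).pow_const 2).aestronglyMeasurable]
    congr 1
    apply lintegral_congr
    intro x
    rw [← sq_abs, ENNReal.ofReal_pow (abs_nonneg _)]
  have hQfin : Q ≠ ⊤ := by
    have h := hg2'.lintegral_lt_top
    have : Q = ∫⁻ x : EuclideanSpace ℝ (Fin n), ENNReal.ofReal ((wt i x * g' x) ^ 2) := by
      apply lintegral_congr
      intro x
      rw [← sq_abs, ENNReal.ofReal_pow (abs_nonneg _)]
    rw [this]
    exact h.ne
  have hmain := main_aux n i ht ht1.le hg'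
  have hfin : (ENNReal.ofReal ((2:ℝ) ^ (|i| / 2)) * ENNReal.ofReal (Cb i n)) ^ 2 * Q ≠ ⊤ :=
    ENNReal.mul_ne_top (ENNReal.pow_ne_top
      (ENNReal.mul_ne_top ENNReal.ofReal_ne_top ENNReal.ofReal_ne_top)) hQfin
  calc (∫ x : EuclideanSpace ℝ (Fin n),
        (wt i x * ∫ y, ker n t y * g (x - y)) ^ 2) ^ ((1 : ℝ) / 2)
      = (∫ x : EuclideanSpace ℝ (Fin n),
          (wt i x * ∫ y, ker n t y * g' (x - y)) ^ 2) ^ ((1 : ℝ) / 2) := by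
        congr 2
        funext x
        rw [hF x]
    _ = P.toReal ^ ((1 : ℝ) / 2) := by rw [heq1]
    _ ≤ (((ENNReal.ofReal ((2:ℝ) ^ (|i| / 2)) * ENNReal.ofReal (Cb i n)) ^ 2 * Q).toReal)
          ^ ((1 : ℝ) / 2) :=
        Real.rpow_le_rpow ENNReal.toReal_nonneg (ENNReal.toReal_mono hfin hmain) (by norm_num)
    _ = (((2:ℝ) ^ (|i| / 2) * Cb i n) ^ 2 * Q.toReal) ^ ((1 : ℝ) / 2) := by
        rw [ENNReal.toReal_mul, ENNReal.toReal_pow, ENNReal.toReal_mul,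
          ENNReal.toReal_ofReal hA0.le, ENNReal.toReal_ofReal hCb.le]
    _ = (2:ℝ) ^ (|i| / 2) * Cb i n *
          (∫ x : EuclideanSpace ℝ (Fin n), (wt i x * g x) ^ 2) ^ ((1 : ℝ) / 2) := by
        rw [show ∫ x : EuclideanSpace ℝ (Fin n), (wt i x * g x) ^ 2 = Q.toReal from by
          rw [integral_congr_ae hR, heq2]]
        rw [Real.mul_rpow (by positivity) ENNReal.toReal_nonneg]
        congr 1
        rw [← Real.rpow_natCast ((2:ℝ) ^ (|i| / 2) * Cb i n) 2,
          ← Real.rpow_mul (by positivity)]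
        norm_num
end
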